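/- Let U and V be Hilbert spaces, B : U × V → ℝ bounded bilinear, T : U → V the operator with (T u, v)_V = B(u, v) for all v. Let U^h ⊆ U be a finite-dimensional subspace and V* := T(U^h) the optimal test space. If u ∈ U and u^h ∈ U^h satisfies B(u^h, v) = B(u, v) for all v ∈ V*, then u^h is a best approximation to u from U^h in the energy norm: ‖u − u^h‖_B ≤ ‖u − w‖_B for all w ∈ U^h, where ‖z‖_B := ‖T z‖_V. -/

import Mathlib

open scoped InnerProductSpace

theorem norm_sub_le_norm_sub_of_real_inner_eq_zero {F : Type*} [NormedAddCommGroup F]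
    [InnerProductSpace ℝ F] {x p q : F} (h : ⟪x - p, p - q⟫_ℝ = 0) : ‖x - p‖ ≤ ‖x - q‖ := by
  have hpyth : ‖x - q‖ ^ 2 = ‖x - p‖ ^ 2 + ‖p - q‖ ^ 2 := by
    rw [← sub_add_sub_cancel x p q, norm_add_sq_real, h, mul_zero, add_zero]
  exact le_of_sq_le_sq (by nlinarith [sq_nonneg ‖p - q‖]) (norm_nonneg _)

theorem avs_best_approximation_general
    {U V : Type*} [NormedAddCommGroup U] [InnerProductSpace ℝ U]
    [NormedAddCommGroup V] [InnerProductSpace ℝ V]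
    (B : U →L[ℝ] V →L[ℝ] ℝ) (T : U →L[ℝ] V)
    (hT : ∀ u : U, ∀ v : V, inner ℝ (T u) v = B u v)
    (Uh : Submodule ℝ U)
    (u : U) (uh : U) (huh : uh ∈ Uh)
    (hgal : ∀ v ∈ T '' (Uh : Set U), B uh v = B u v) :
    ∀ w ∈ Uh, ‖T (u - uh)‖ ≤ ‖T (u - w)‖ := by
  intro w hw
  -- the Galerkin condition tested with `v = T (uh - w) ∈ V*`
  have horth : ⟪T u - T uh, T uh - T w⟫_ℝ = 0 := by
    rw [← map_sub, ← map_sub, hT, map_sub B, sub_apply,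
      hgal _ ⟨uh - w, Uh.sub_mem huh hw, rfl⟩, sub_self]
  simpa only [map_sub] using norm_sub_le_norm_sub_of_real_inner_eq_zero horth

/-- Best approximation property of the AVS-FE/DPG method in the energy norm
`‖z‖_B = ‖T z‖_V`, where the optimal test space is `V* = T(U^h)`. -/
theorem avs_best_approximation
    {U V : Type*} [NormedAddCommGroup U] [InnerProductSpace ℝ U] [CompleteSpace U]
    [NormedAddCommGroup V] [InnerProductSpace ℝ V] [CompleteSpace V]
    (B : U →L[ℝ] V →L[ℝ] ℝ) (T : U →L[ℝ] V)
    (hT : ∀ u : U, ∀ v : V, inner ℝ (T u) v = B u v)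
    (Uh : Submodule ℝ U) [FiniteDimensional ℝ Uh]
    (u : U) (uh : U) (huh : uh ∈ Uh)
    (hgal : ∀ v ∈ T '' (Uh : Set U), B uh v = B u v) :
    ∀ w ∈ Uh, ‖T (u - uh)‖ ≤ ‖T (u - w)‖ :=
  avs_best_approximation_general B T hT Uh u uh huh hgal
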